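/- arXiv:1406.2636 — 6 statements merged into one kernel-verified Lean document; each statement's English description precedes it below -/
import Mathlib

section
/- Every simple graph that admits a segment representation admits a segment representation in which all segments are nondegenerate and no two distinct segments lie on a common line. -/
/-- The segment in the plane with the given pair of endpoints. -/
def segOf (e : (ℝ × ℝ) × (ℝ × ℝ)) : Set (ℝ × ℝ) := segment ℝ e.1 e.2

/-- `f` (given by endpoint pairs) is a segment representation of `G`. -/
def IsSegRep {V : Type*} (G : SimpleGraph V) (f : V → (ℝ × ℝ) × (ℝ × ℝ)) : Prop :=
  ∀ u v : V, u ≠ v → ((segOf (f u) ∩ segOf (f v)).Nonempty ↔ G.Adj u v)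

/-- `G` is a segment graph. -/
def IsSegGraph {V : Type*} (G : SimpleGraph V) : Prop := ∃ f, IsSegRep G f

/-!
Lengthen every segment slightly at both ends. This makes the segments nondegenerate, keeps
non-adjacent segments disjoint (disjointness of two segments is an open condition), and makes
any two meeting segments share a point of their relative interiors. Two such segments either lie
on a common line or cross properly, and proper crossing is again an open condition.

The segments are then turned one at a time about an interior point `P` by the small spiral
similarity `x ↦ x + δ • rot (x - P)`. Among the unturned segments on one line, pick the one whose
lower end (along the line) is highest; just above that end there is a point `P` interior to all
its unturned collinear neighbours, so the turned segment crosses each of them properly. For all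
small `δ ≠ 0` the open conditions survive and the turned segment shares a line with no other one.
-/

open Set Filter Topology AffineMap

lemma lineMap_eq_zero_mem_Ioo {a b t : ℝ} (hab : a * b < 0) (ht : lineMap a b t = 0) :
    t ∈ Ioo 0 1 := by
  rw [lineMap_apply_ring] at ht
  have h1 := congrArg (· * a) ht
  have h2 := congrArg (· * b) ht
  constructor <;> nlinarith [sq_nonneg a, sq_nonneg b]

lemma exists_lineMap_eq_zero {a b : ℝ} (hab : a * b < 0) : ∃ t : ℝ, lineMap a b t = 0 := by
  have : a - b ≠ 0 := fun h => by
    obtain rfl := sub_eq_zero.1 h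
    nlinarith [mul_self_nonneg a]
  exact ⟨a / (a - b), by rw [lineMap_apply_ring]; field_simp; ring⟩

lemma mul_neg_of_lineMap_eq_zero {a b t : ℝ} (ht : t ∈ Ioo 0 1) (h : lineMap a b t = 0)
    (hab : a ≠ 0 ∨ b ≠ 0) : a * b < 0 := by
  rw [lineMap_apply_ring] at h
  obtain ⟨ht0, ht1⟩ := ht
  have ha : a ≠ 0 := by
    rintro rfl
    simp only [mul_zero, zero_add, mul_eq_zero, ht0.ne', false_or] at h
    exact hab.elim (· rfl) (· h)
  have := congrArg (· * a) h
  nlinarith [pow_two_pos_of_ne_zero ha]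

lemma eventually_add_mul_ne_zero {a b : ℝ} (h : a ≠ 0 ∨ b ≠ 0) :
    ∀ᶠ δ in 𝓝[≠] 0, a + δ * b ≠ 0 := by
  by_cases ha : a = 0
  · filter_upwards [self_mem_nhdsWithin] with δ hδ
    simpa [ha] using And.intro (mem_compl_singleton_iff.1 hδ) (h.resolve_left (not_not.2 ha))
  · have : Tendsto (fun δ : ℝ => a + δ * b) (𝓝 0) (𝓝 a) := by
      simpa using (by fun_prop : Continuous fun δ : ℝ => a + δ * b).tendsto 0
    exact (this.eventually_ne ha).filter_mono nhdsWithin_le_nhds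

lemma Finset.exists_mem_Ioo_forall_mem_Ioo {ι : Type*} (S : Finset ι) (hS : S.Nonempty)
    (lo hi : ι → ℝ) (h : ∀ i ∈ S, lo i < hi i) :
    ∃ v ∈ S, ∃ p ∈ Set.Ioo (lo v) (hi v), ∀ y ∈ S,
      (Set.Ioo (lo v) (hi v) ∩ Set.Ioo (lo y) (hi y)).Nonempty → p ∈ Set.Ioo (lo y) (hi y) := by
  obtain ⟨v, hv, hmax⟩ := S.exists_max_image lo hS
  have : ∀ᶠ p in 𝓝[>] (lo v), p < hi v ∧
      ∀ y ∈ S, (Set.Ioo (lo v) (hi v) ∩ Set.Ioo (lo y) (hi y)).Nonempty → p < hi y := by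
    refine Eventually.filter_mono nhdsWithin_le_nhds <|
      (eventually_lt_nhds (h v hv)).and ((eventually_all_finset S).2 fun y _ => ?_)
    exact eventually_imp_distrib_left.2 fun ⟨x, hxv, hxy⟩ => eventually_lt_nhds (hxv.1.trans hxy.2)
  obtain ⟨p, ⟨hpv, hpy⟩, hp⟩ := (this.and self_mem_nhdsWithin).exists
  exact ⟨v, hv, p, ⟨hp, hpv⟩, fun y hy hne => ⟨(hmax y hy).trans_lt hp, hpy y hy hne⟩⟩

lemma isOpen_setOf_disjoint_segment {E : Type*} [TopologicalSpace E] [AddCommGroup E]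
    [Module ℝ E] [IsTopologicalAddGroup E] [ContinuousSMul ℝ E] [T2Space E] :
    IsOpen {p : (E × E) × (E × E) | Disjoint (segment ℝ p.1.1 p.1.2) (segment ℝ p.2.1 p.2.2)} := by
  have hmeet :
      {p : (E × E) × (E × E) | Disjoint (segment ℝ p.1.1 p.1.2) (segment ℝ p.2.1 p.2.2)}ᶜ =
      Prod.fst '' {q : ((E × E) × (E × E)) × (Icc (0 : ℝ) 1 × Icc (0 : ℝ) 1) |
        lineMap q.1.1.1 q.1.1.2 (q.2.1 : ℝ) = lineMap q.1.2.1 q.1.2.2 (q.2.2 : ℝ)} := by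
    ext p
    simp only [mem_compl_iff, mem_ofPred_eq, not_disjoint_iff, segment_eq_image_lineMap,
      mem_image, Prod.exists, exists_and_right, exists_eq_right, Subtype.exists]
    constructor
    · rintro ⟨x, ⟨s, hs, rfl⟩, ⟨t, ht, hst⟩⟩
      exact ⟨s, hs, t, ht, hst.symm⟩
    · rintro ⟨s, hs, t, ht, hst⟩
      exact ⟨_, ⟨s, hs, rfl⟩, ⟨t, ht, hst.symm⟩⟩
  rw [← isClosed_compl_iff, hmeet]
  refine isClosedMap_fst_of_compactSpace _ (isClosed_eq ?_ ?_) <;>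
    simp only [lineMap_apply_module'] <;> fun_prop

namespace Plane

def cross (x y : ℝ × ℝ) : ℝ := x.1 * y.2 - x.2 * y.1

def rot (x : ℝ × ℝ) : ℝ × ℝ := (-x.2, x.1)

def dir (e : (ℝ × ℝ) × (ℝ × ℝ)) : ℝ × ℝ := e.2 - e.1

def OnCommonLine (e e' : (ℝ × ℝ) × (ℝ × ℝ)) : Prop :=
  Collinear ℝ ({e.1, e.2, e'.1, e'.2} : Set (ℝ × ℝ))

lemma OnCommonLine.symm {e e' : (ℝ × ℝ) × (ℝ × ℝ)} (h : OnCommonLine e e') :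
    OnCommonLine e' e := by
  have : ({e'.1, e'.2, e.1, e.2} : Set (ℝ × ℝ)) = {e.1, e.2, e'.1, e'.2} := by
    ext
    simp only [mem_insert_iff, mem_singleton_iff]
    tauto
  rwa [OnCommonLine, this]

lemma cross_sub_lineMap (w A C D : ℝ × ℝ) (t : ℝ) :
    cross w (lineMap C D t - A) = lineMap (cross w (C - A)) (cross w (D - A)) t := by
  simp only [cross, lineMap_apply_module, Prod.fst_sub, Prod.snd_sub,
    Prod.fst_add, Prod.snd_add, Prod.smul_fst, Prod.smul_snd, smul_eq_mul]
  ring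

lemma fst_sq_add_snd_sq_pos {w : ℝ × ℝ} (hw : w ≠ 0) : 0 < w.1 ^ 2 + w.2 ^ 2 := by
  rcases not_and_or.1 (mt Prod.ext_iff.2 hw) with h | h
  · nlinarith [pow_two_pos_of_ne_zero h, sq_nonneg w.2]
  · nlinarith [pow_two_pos_of_ne_zero h, sq_nonneg w.1]

lemma exists_eq_smul_of_cross_eq_zero {w z : ℝ × ℝ} (hw : w ≠ 0) (h : cross w z = 0) :
    ∃ r : ℝ, z = r • w := by
  have hpos := fst_sq_add_snd_sq_pos hw
  unfold cross at h
  refine ⟨(z.1 * w.1 + z.2 * w.2) / (w.1 ^ 2 + w.2 ^ 2), Prod.ext ?_ ?_⟩ <;>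
    simp only [Prod.smul_fst, Prod.smul_snd, smul_eq_mul] <;>
    rw [div_mul_eq_mul_div, eq_div_iff hpos.ne']
  · linear_combination -w.2 * h
  · linear_combination w.1 * h

lemma collinear_of_forall_cross_eq_zero {s : Set (ℝ × ℝ)} {A B : ℝ × ℝ} (hA : A ∈ s)
    (hAB : A ≠ B) (h : ∀ x ∈ s, cross (B - A) (x - A) = 0) : Collinear ℝ s := by
  refine (collinear_iff_of_mem hA).2 ⟨B - A, fun x hx => ?_⟩
  obtain ⟨r, hr⟩ := exists_eq_smul_of_cross_eq_zero (sub_ne_zero.2 hAB.symm) (h x hx)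
  exact ⟨r, by rw [vadd_eq_add, ← hr, sub_add_cancel]⟩

lemma _root_.Collinear.cross_sub_eq_zero {s : Set (ℝ × ℝ)} (h : Collinear ℝ s) {a b c d : ℝ × ℝ}
    (ha : a ∈ s) (hb : b ∈ s) (hc : c ∈ s) (hd : d ∈ s) : cross (b - a) (d - c) = 0 := by
  obtain ⟨p, v, hv⟩ := (collinear_iff_exists_forall_eq_smul_vadd s).1 h
  obtain ⟨ra, rfl⟩ := hv a ha
  obtain ⟨rb, rfl⟩ := hv b hb
  obtain ⟨rc, rfl⟩ := hv c hc
  obtain ⟨rd, rfl⟩ := hv d hd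
  simp only [cross, vadd_eq_add, Prod.fst_sub, Prod.snd_sub, Prod.fst_add, Prod.snd_add,
    Prod.smul_fst, Prod.smul_snd, smul_eq_mul]
  ring

def StrictlySeparates (A B C D : ℝ × ℝ) : Prop :=
  cross (B - A) (C - A) * cross (B - A) (D - A) < 0

def ProperlyCross (e e' : (ℝ × ℝ) × (ℝ × ℝ)) : Prop :=
  StrictlySeparates e.1 e.2 e'.1 e'.2 ∧ StrictlySeparates e'.1 e'.2 e.1 e.2

lemma ProperlyCross.symm {e e' : (ℝ × ℝ) × (ℝ × ℝ)} (h : ProperlyCross e e') :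
    ProperlyCross e' e :=
  And.symm h

lemma isOpen_setOf_properlyCross :
    IsOpen {p : ((ℝ × ℝ) × (ℝ × ℝ)) × ((ℝ × ℝ) × (ℝ × ℝ)) | ProperlyCross p.1 p.2} := by
  simp only [ProperlyCross, StrictlySeparates, cross, ofPred_and]
  exact (isOpen_lt (by fun_prop) continuous_const).inter (isOpen_lt (by fun_prop) continuous_const)

lemma cross_sub_eq_zero_of_mem_openSegment {A B P : ℝ × ℝ} (hP : P ∈ openSegment ℝ A B) :
    cross (B - A) (P - A) = 0 := by
  rw [openSegment_eq_image_lineMap] at hP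
  obtain ⟨s, -, rfl⟩ := hP
  rw [cross_sub_lineMap]
  simp [cross, mul_comm]

lemma ProperlyCross.inter_nonempty {e e' : (ℝ × ℝ) × (ℝ × ℝ)} (h : ProperlyCross e e') :
    (segOf e ∩ segOf e').Nonempty := by
  obtain ⟨A, B⟩ := e
  obtain ⟨C, D⟩ := e'
  obtain ⟨hAB, hCD⟩ := h
  obtain ⟨t, ht⟩ := exists_lineMap_eq_zero hAB
  have hBA : B - A ≠ 0 := fun h0 => by simp [StrictlySeparates, h0, cross] at hAB
  obtain ⟨s, hs⟩ := exists_eq_smul_of_cross_eq_zero hBA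
    ((cross_sub_lineMap _ _ _ _ _).trans ht)
  have hX : lineMap C D t = lineMap A B s := by
    rw [lineMap_apply_module' A, ← hs, sub_add_cancel]
  have hs01 : s ∈ Ioo 0 1 := by
    refine lineMap_eq_zero_mem_Ioo hCD ?_
    rw [← cross_sub_lineMap, ← hX, cross_sub_lineMap]
    simp [cross, mul_comm]
  refine ⟨lineMap C D t, ?_, ?_⟩
  · rw [hX]
    exact lineMap_mem_segment (𝕜 := ℝ) A B (Ioo_subset_Icc_self hs01)
  · exact lineMap_mem_segment (𝕜 := ℝ) C D
      (Ioo_subset_Icc_self (lineMap_eq_zero_mem_Ioo hAB ht))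

lemma strictlySeparates_of_mem_openSegment {A B C D P : ℝ × ℝ} (hAB : A ≠ B)
    (hP : P ∈ openSegment ℝ A B) (hP' : P ∈ openSegment ℝ C D)
    (h : ¬ Collinear ℝ ({A, B, C, D} : Set (ℝ × ℝ))) : StrictlySeparates A B C D := by
  rw [openSegment_eq_image_lineMap] at hP'
  obtain ⟨t, ht, rfl⟩ := hP'
  have h0 := cross_sub_eq_zero_of_mem_openSegment hP
  rw [cross_sub_lineMap] at h0
  refine mul_neg_of_lineMap_eq_zero ht h0 (not_and_or.1 fun hCD => h ?_)
  refine collinear_of_forall_cross_eq_zero (mem_insert _ _) hAB ?_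
  simp only [mem_insert_iff, mem_singleton_iff, forall_eq_or_imp, forall_eq]
  exact ⟨by simp [cross], by simp [cross, mul_comm], hCD⟩

lemma properlyCross_of_mem_openSegment {e e' : (ℝ × ℝ) × (ℝ × ℝ)} {P : ℝ × ℝ}
    (he : e.1 ≠ e.2) (he' : e'.1 ≠ e'.2) (hP : P ∈ openSegment ℝ e.1 e.2)
    (hP' : P ∈ openSegment ℝ e'.1 e'.2) (h : ¬ OnCommonLine e e') : ProperlyCross e e' :=
  ⟨strictlySeparates_of_mem_openSegment he hP hP' h,
    strictlySeparates_of_mem_openSegment he' hP' hP fun h' => h (OnCommonLine.symm h')⟩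

variable {V : Type*} (G : SimpleGraph V)

/-- `T` is the set of segments that have not been turned yet. -/
structure IsGenericRepOutside (T : Finset V) (g : V → (ℝ × ℝ) × (ℝ × ℝ)) : Prop where
  nondegenerate : ∀ v, (g v).1 ≠ (g v).2
  disjoint : ∀ u v, u ≠ v → ¬ G.Adj u v → Disjoint (segOf (g u)) (segOf (g v))
  inter_openSegment : ∀ u ∈ T, ∀ v ∈ T, G.Adj u v →
    (openSegment ℝ (g u).1 (g u).2 ∩ openSegment ℝ (g v).1 (g v).2).Nonempty
  properlyCross : ∀ u ∉ T, ∀ v, G.Adj u v → ProperlyCross (g u) (g v)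
  not_onCommonLine : ∀ u ∉ T, ∀ v ∉ T, u ≠ v → ¬ OnCommonLine (g u) (g v)

variable {G}

noncomputable def extend (η : ℝ) (e : (ℝ × ℝ) × (ℝ × ℝ)) : (ℝ × ℝ) × (ℝ × ℝ) :=
  let w : ℝ × ℝ := if e.1 = e.2 then (1, 0) else dir e
  (e.1 - η • w, e.2 + η • w)

lemma tendsto_extend (e : (ℝ × ℝ) × (ℝ × ℝ)) :
    Tendsto (fun η => extend η e) (𝓝 0) (𝓝 e) := by
  have : Continuous fun η => extend η e := by unfold extend; fun_prop
  simpa [extend] using this.tendsto 0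

lemma extend_fst_ne_snd {η : ℝ} (hη : 0 < η) (e : (ℝ × ℝ) × (ℝ × ℝ)) :
    (extend η e).1 ≠ (extend η e).2 := by
  intro h
  by_cases hAB : e.1 = e.2
  · have := congrArg Prod.fst h
    simp only [extend, hAB, if_true, Prod.fst_sub, Prod.fst_add, Prod.smul_fst,
      smul_eq_mul, mul_one] at this
    linarith
  · apply hAB
    simp only [extend, hAB, if_false, dir] at h
    have : (1 + 2 * η) • (e.2 - e.1) = 0 := by rw [← sub_eq_zero.2 h.symm]; module
    rw [smul_eq_zero] at this
    exact (sub_eq_zero.1 (this.resolve_left (by positivity))).symm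

lemma segOf_subset_openSegment_extend {η : ℝ} (hη : 0 < η) (e : (ℝ × ℝ) × (ℝ × ℝ)) :
    segOf e ⊆ openSegment ℝ (extend η e).1 (extend η e).2 := by
  intro x hx
  rw [segOf, segment_eq_image_lineMap] at hx
  obtain ⟨t, ⟨ht0, ht1⟩, rfl⟩ := hx
  by_cases hAB : e.1 = e.2
  · have : lineMap e.1 e.2 t = lineMap (extend η e).1 (extend η e).2 (1 / 2 : ℝ) := by
      simp only [extend, hAB, if_true, lineMap_same_apply, lineMap_apply_module]
      module
    rw [this]
    exact lineMap_mem_openSegment (𝕜 := ℝ) _ _ ⟨by norm_num, by norm_num⟩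
  · have hden : 0 < 1 + 2 * η := by positivity
    have : lineMap e.1 e.2 t =
        lineMap (extend η e).1 (extend η e).2 ((t + η) / (1 + 2 * η)) := by
      simp only [extend, hAB, if_false, dir, lineMap_apply_module]
      match_scalars <;> field_simp <;> ring
    rw [this]
    refine lineMap_mem_openSegment (𝕜 := ℝ) _ _ ⟨by positivity, ?_⟩
    rw [div_lt_one hden]
    linarith

lemma exists_isGenericRepOutside_univ [Fintype V] {f : V → (ℝ × ℝ) × (ℝ × ℝ)}
    (hf : IsSegRep G f) : ∃ g, IsGenericRepOutside G Finset.univ g := by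
  have hdisj : ∀ᶠ η in 𝓝 0, ∀ u v, u ≠ v → ¬ G.Adj u v →
      Disjoint (segOf (extend η (f u))) (segOf (extend η (f v))) := by
    refine eventually_all.2 fun u => eventually_all.2 fun v =>
      eventually_imp_distrib_left.2 fun huv => eventually_imp_distrib_left.2 fun hadj => ?_
    have hfuv : Disjoint (segOf (f u)) (segOf (f v)) := by
      by_contra h
      exact hadj ((hf u v huv).1 (not_disjoint_iff_nonempty_inter.1 h))
    exact ((tendsto_extend _).prodMk_nhds (tendsto_extend _)).eventually
      (isOpen_setOf_disjoint_segment.mem_nhds hfuv)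
  obtain ⟨η, hη, hηpos⟩ := ((hdisj.filter_mono nhdsWithin_le_nhds).and
    (self_mem_nhdsWithin (s := Ioi 0))).exists
  refine ⟨fun v => extend η (f v), fun v => extend_fst_ne_snd hηpos _, hη,
    fun u _ v _ huv => ?_, fun u hu => absurd (Finset.mem_univ u) hu,
    fun u hu => absurd (Finset.mem_univ u) hu⟩
  obtain ⟨x, hxu, hxv⟩ := (hf u v huv.ne).2 huv
  exact ⟨x, segOf_subset_openSegment_extend hηpos _ hxu,
    segOf_subset_openSegment_extend hηpos _ hxv⟩

lemma cross_ne_zero_or_cross_rot_ne_zero {d w : ℝ × ℝ} (hd : d ≠ 0) (hw : w ≠ 0) :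
    cross d w ≠ 0 ∨ cross (rot d) w ≠ 0 := by
  by_contra! h
  obtain ⟨r, rfl⟩ := exists_eq_smul_of_cross_eq_zero hd h.1
  have h2 : cross (rot d) (r • d) = -(r * (d.1 ^ 2 + d.2 ^ 2)) := by
    simp only [cross, rot, Prod.smul_fst, Prod.smul_snd, smul_eq_mul]
    ring
  rw [h.2, zero_eq_neg, mul_eq_zero, or_iff_left (fst_sq_add_snd_sq_pos hd).ne'] at h2
  simp [h2] at hw

def turn (P : ℝ × ℝ) (δ : ℝ) (x : ℝ × ℝ) : ℝ × ℝ := x + δ • rot (x - P)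

def tilt (P : ℝ × ℝ) (δ : ℝ) (e : (ℝ × ℝ) × (ℝ × ℝ)) : (ℝ × ℝ) × (ℝ × ℝ) :=
  (turn P δ e.1, turn P δ e.2)

lemma tendsto_tilt (P : ℝ × ℝ) (e : (ℝ × ℝ) × (ℝ × ℝ)) :
    Tendsto (fun δ => tilt P δ e) (𝓝 0) (𝓝 e) := by
  have : Continuous fun δ => tilt P δ e := by unfold tilt turn; fun_prop
  simpa [tilt, turn] using this.tendsto 0

lemma turn_lineMap (P A B : ℝ × ℝ) (δ t : ℝ) :
    turn P δ (lineMap A B t) = lineMap (turn P δ A) (turn P δ B) t := by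
  simp only [turn, rot, lineMap_apply_module]
  ext <;> simp <;> ring

lemma mem_openSegment_tilt {P : ℝ × ℝ} {e : (ℝ × ℝ) × (ℝ × ℝ)} (δ : ℝ)
    (hP : P ∈ openSegment ℝ e.1 e.2) : P ∈ openSegment ℝ (tilt P δ e).1 (tilt P δ e).2 := by
  rw [openSegment_eq_image_lineMap] at hP ⊢
  obtain ⟨t, ht, hPt⟩ := hP
  refine ⟨t, ht, ?_⟩
  rw [tilt, ← turn_lineMap, hPt]
  simp [turn, rot]

lemma cross_dir_tilt (P : ℝ × ℝ) (δ : ℝ) (e : (ℝ × ℝ) × (ℝ × ℝ)) (w : ℝ × ℝ) :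
    cross (dir (tilt P δ e)) w = cross (dir e) w + δ * cross (rot (dir e)) w := by
  simp only [cross, dir, tilt, turn, rot, Prod.fst_sub, Prod.snd_sub, Prod.fst_add,
    Prod.snd_add, Prod.smul_fst, Prod.smul_snd, smul_eq_mul]
  ring

lemma eventually_not_onCommonLine_tilt (P : ℝ × ℝ) {e e' : (ℝ × ℝ) × (ℝ × ℝ)}
    (he : e.1 ≠ e.2) (he' : e'.1 ≠ e'.2) :
    ∀ᶠ δ in 𝓝[≠] 0, ¬ OnCommonLine (tilt P δ e) e' := by
  have hne := cross_ne_zero_or_cross_rot_ne_zero (d := dir e) (w := dir e')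
    (sub_ne_zero.2 he.symm) (sub_ne_zero.2 he'.symm)
  filter_upwards [eventually_add_mul_ne_zero hne] with δ hδ hcol
  rw [← cross_dir_tilt P] at hδ
  exact hδ (hcol.cross_sub_eq_zero (by simp) (by simp) (by simp) (by simp))

lemma tilt_fst_ne_snd (P : ℝ × ℝ) (δ : ℝ) {e : (ℝ × ℝ) × (ℝ × ℝ)} (he : e.1 ≠ e.2) :
    (tilt P δ e).1 ≠ (tilt P δ e).2 := by
  intro h
  have h0 := cross_dir_tilt P δ e (rot (dir e))
  rw [dir, ← h, sub_self] at h0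
  have hpos := fst_sq_add_snd_sq_pos (sub_ne_zero.2 he.symm)
  simp only [cross, rot, dir, Prod.fst_zero, Prod.snd_zero] at h0
  nlinarith

lemma exists_common_mem_openSegment {ι : Type*} (T : Finset ι) (hT : T.Nonempty)
    (f : ι → (ℝ × ℝ) × (ℝ × ℝ)) (hf : ∀ i, (f i).1 ≠ (f i).2) :
    ∃ v ∈ T, ∃ P ∈ openSegment ℝ (f v).1 (f v).2, ∀ y ∈ T, OnCommonLine (f v) (f y) →
      (openSegment ℝ (f v).1 (f v).2 ∩ openSegment ℝ (f y).1 (f y).2).Nonempty →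
      P ∈ openSegment ℝ (f y).1 (f y).2 := by
  classical
  obtain ⟨v₀, hv₀⟩ := hT
  set L := line[ℝ, (f v₀).1, (f v₀).2]
  set φ : ℝ →ᵃ[ℝ] ℝ × ℝ := lineMap (f v₀).1 (f v₀).2
  set S := T.filter fun w => (f w).1 ∈ L ∧ (f w).2 ∈ L
  have hcoord : ∀ w ∈ S, ∃ a b : ℝ, φ a = (f w).1 ∧ φ b = (f w).2 := fun w hw => by
    obtain ⟨-, h1, h2⟩ := Finset.mem_filter.1 hw
    obtain ⟨a, ha⟩ := mem_affineSpan_pair_iff_exists_lineMap_eq.1 h1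
    obtain ⟨b, hb⟩ := mem_affineSpan_pair_iff_exists_lineMap_eq.1 h2
    exact ⟨a, b, ha, hb⟩
  choose! a b hab using hcoord
  have hφ : Function.Injective φ := lineMap_injective ℝ (hf v₀)
  have hne : ∀ w ∈ S, a w ≠ b w := fun w hw h => hf w (by rw [← (hab w hw).1, h, (hab w hw).2])
  have hseg : ∀ w ∈ S, openSegment ℝ (f w).1 (f w).2 =
      φ '' Ioo (min (a w) (b w)) (max (a w) (b w)) := fun w hw => by
    rw [← (hab w hw).1, ← (hab w hw).2, ← image_openSegment, openSegment_eq_Ioo' (hne w hw)]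
  obtain ⟨v, hvS, p, hp, hpivot⟩ := S.exists_mem_Ioo_forall_mem_Ioo
    ⟨v₀, Finset.mem_filter.2
      ⟨hv₀, left_mem_affineSpan_pair _ _ _, right_mem_affineSpan_pair _ _ _⟩⟩
    (fun w => min (a w) (b w)) (fun w => max (a w) (b w)) fun w hw => min_lt_max.2 (hne w hw)
  obtain ⟨hvT, hvL⟩ := Finset.mem_filter.1 hvS
  refine ⟨v, hvT, φ p, hseg v hvS ▸ mem_image_of_mem φ hp, fun y hy hcol hmeet => ?_⟩
  have hline : line[ℝ, (f v).1, (f v).2] ≤ L := affineSpan_pair_le_of_mem_of_mem hvL.1 hvL.2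
  have hyS : y ∈ S := Finset.mem_filter.2 ⟨hy,
    hline (hcol.mem_affineSpan_of_mem_of_ne (by simp) (by simp) (by simp) (hf v)),
    hline (hcol.mem_affineSpan_of_mem_of_ne (by simp) (by simp) (by simp) (hf v))⟩
  rw [hseg v hvS, hseg y hyS, ← image_inter hφ] at hmeet
  rw [hseg y hyS]
  exact mem_image_of_mem φ (hpivot y hyS hmeet.of_image)

lemma IsGenericRepOutside.update [DecidableEq V] {T : Finset V} {g : V → (ℝ × ℝ) × (ℝ × ℝ)}
    (hg : IsGenericRepOutside G T g) {v : V} {e : (ℝ × ℝ) × (ℝ × ℝ)} (he : e.1 ≠ e.2)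
    (hy : ∀ y, y ≠ v → (¬ G.Adj v y → Disjoint (segOf e) (segOf (g y))) ∧
      (G.Adj v y → ProperlyCross e (g y)) ∧ ¬ OnCommonLine e (g y)) :
    IsGenericRepOutside G (T.erase v) (Function.update g v e) := by
  have hT : ∀ u, u ∉ T.erase v → u ≠ v → u ∉ T := fun u hu huv h =>
    hu (Finset.mem_erase.2 ⟨huv, h⟩)
  constructor
  · intro u
    rcases eq_or_ne u v with rfl | hu
    · simpa using he
    · simpa [hu] using hg.nondegenerate u
  · intro u w huw hadj
    rcases eq_or_ne u v with rfl | hu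
    · simpa [huw.symm] using (hy w huw.symm).1 hadj
    rcases eq_or_ne w v with rfl | hw
    · simpa [hu] using ((hy u hu).1 fun h => hadj h.symm).symm
    simpa [hu, hw] using hg.disjoint u w huw hadj
  · intro u hu w hw hadj
    rw [Function.update_of_ne (Finset.ne_of_mem_erase hu),
      Function.update_of_ne (Finset.ne_of_mem_erase hw)]
    exact hg.inter_openSegment u (Finset.mem_of_mem_erase hu) w (Finset.mem_of_mem_erase hw) hadj
  · intro u hu w hadj
    rcases eq_or_ne u v with rfl | huv
    · simpa [hadj.ne.symm] using (hy w hadj.ne.symm).2.1 hadj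
    rcases eq_or_ne w v with rfl | hw
    · simpa [huv] using ((hy u huv).2.1 hadj.symm).symm
    simpa [huv, hw] using hg.properlyCross u (hT u hu huv) w hadj
  · intro u hu w hw huw
    rcases eq_or_ne u v with rfl | huv
    · simpa [huw.symm] using (hy w huw.symm).2.2
    rcases eq_or_ne w v with rfl | hwv
    · simpa [huv] using fun h => (hy u huv).2.2 h.symm
    simpa [huv, hwv] using hg.not_onCommonLine u (hT u hu huv) w (hT w hw hwv) huw

lemma IsGenericRepOutside.exists_erase [Finite V] [DecidableEq V] {T : Finset V}
    {g : V → (ℝ × ℝ) × (ℝ × ℝ)} (hg : IsGenericRepOutside G T g) (hT : T.Nonempty) :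
    ∃ v ∈ T, ∃ g', IsGenericRepOutside G (T.erase v) g' := by
  obtain ⟨v, hvT, P, hPv, hpivot⟩ := exists_common_mem_openSegment T hT g hg.nondegenerate
  have htilt := tendsto_tilt P (g v)
  have hev : ∀ᶠ δ in 𝓝[≠] 0, ∀ y, y ≠ v →
      (¬ G.Adj v y → Disjoint (segOf (tilt P δ (g v))) (segOf (g y))) ∧
      (G.Adj v y → ProperlyCross (tilt P δ (g v)) (g y)) ∧
      ¬ OnCommonLine (tilt P δ (g v)) (g y) := by
    refine eventually_all.2 fun y => eventually_imp_distrib_left.2 fun hyv => ?_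
    have hline := eventually_not_onCommonLine_tilt P (hg.nondegenerate v) (hg.nondegenerate y)
    refine .and ?_ (.and ?_ hline)
    · refine eventually_imp_distrib_left.2 fun hadj => .filter_mono nhdsWithin_le_nhds ?_
      exact (htilt.prodMk_nhds tendsto_const_nhds).eventually
        (isOpen_setOf_disjoint_segment.mem_nhds (hg.disjoint v y hyv.symm hadj))
    refine eventually_imp_distrib_left.2 fun hadj => ?_
    by_cases hyT : y ∈ T
    · have hmeet := hg.inter_openSegment v hvT y hyT hadj
      by_cases hcol : OnCommonLine (g v) (g y)
      · filter_upwards [hline] with δ hδ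
        exact properlyCross_of_mem_openSegment (tilt_fst_ne_snd P δ (hg.nondegenerate v))
          (hg.nondegenerate y) (mem_openSegment_tilt δ hPv) (hpivot y hyT hcol hmeet) hδ
      · obtain ⟨Q, hQv, hQy⟩ := hmeet
        have hpc := properlyCross_of_mem_openSegment (hg.nondegenerate v) (hg.nondegenerate y)
          hQv hQy hcol
        exact Eventually.filter_mono nhdsWithin_le_nhds <| (htilt.prodMk_nhds
          tendsto_const_nhds).eventually (isOpen_setOf_properlyCross.mem_nhds hpc)
    · exact Eventually.filter_mono nhdsWithin_le_nhds <|
        (htilt.prodMk_nhds tendsto_const_nhds).eventually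
          (isOpen_setOf_properlyCross.mem_nhds (hg.properlyCross y hyT v hadj.symm).symm)
  obtain ⟨δ, hδ⟩ := hev.exists
  exact ⟨v, hvT, _, hg.update (tilt_fst_ne_snd P δ (hg.nondegenerate v)) hδ⟩

lemma IsGenericRepOutside.exists_isGenericRepOutside_empty [Finite V] [DecidableEq V]
    {T : Finset V} {g : V → (ℝ × ℝ) × (ℝ × ℝ)} (hg : IsGenericRepOutside G T g) :
    ∃ g', IsGenericRepOutside G ∅ g' := by
  induction T using Finset.strongInduction generalizing g with
  | H T ih =>
    rcases T.eq_empty_or_nonempty with rfl | hT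
    · exact ⟨g, hg⟩
    obtain ⟨v, hv, g', hg'⟩ := hg.exists_erase hT
    exact ih _ (Finset.erase_ssubset hv) hg'

lemma IsGenericRepOutside.isSegRep {g : V → (ℝ × ℝ) × (ℝ × ℝ)}
    (hg : IsGenericRepOutside G ∅ g) : IsSegRep G g := fun u v huv =>
  ⟨fun hmeet => by_contra fun hadj =>
      not_disjoint_iff_nonempty_inter.2 hmeet (hg.disjoint u v huv hadj),
    fun hadj => (hg.properlyCross u (Finset.notMem_empty u) v hadj).inter_nonempty⟩

end Plane

open Plane in
theorem stmt8 {V : Type*} [Fintype V] (G : SimpleGraph V) (h : IsSegGraph G) :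
    ∃ f : V → (ℝ × ℝ) × (ℝ × ℝ), IsSegRep G f ∧
      (∀ v : V, (f v).1 ≠ (f v).2) ∧
      (∀ u v : V, u ≠ v →
        ¬ Collinear ℝ ({(f u).1, (f u).2, (f v).1, (f v).2} : Set (ℝ × ℝ))) := by
  classical
  obtain ⟨f₀, hf₀⟩ := h
  obtain ⟨f, hf⟩ := exists_isGenericRepOutside_univ hf₀
  obtain ⟨g, hg⟩ := hf.exists_isGenericRepOutside_empty
  exact ⟨g, hg.isSegRep, hg.nondegenerate, fun u v huv =>
    hg.not_onCommonLine u (Finset.notMem_empty u) v (Finset.notMem_empty v) huv⟩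
end

section
/- Every simple graph that admits a segment representation admits a segment representation in which every segment endpoint has integer coordinates. -/
/-- Cast a pair of integer points to a pair of real points. -/
def intPts (g : (ℤ × ℤ) × (ℤ × ℤ)) : (ℝ × ℝ) × (ℝ × ℝ) :=
  (((g.1.1 : ℝ), (g.1.2 : ℝ)), ((g.2.1 : ℝ), (g.2.2 : ℝ)))

open AffineMap Filter Topology Set

section Segments

variable {E : Type*} [NormedAddCommGroup E] [NormedSpace ℝ E]

theorem isClosed_setOf_segment_inter_nonempty :
    IsClosed {x : (E × E) × (E × E) |
      (segment ℝ x.1.1 x.1.2 ∩ segment ℝ x.2.1 x.2.2).Nonempty} := by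
  have hclosed : IsClosed {y : ((E × E) × (E × E)) × (unitInterval × unitInterval) |
      lineMap y.1.1.1 y.1.1.2 (y.2.1 : ℝ) = lineMap y.1.2.1 y.1.2.2 (y.2.2 : ℝ)} :=
    isClosed_eq (by fun_prop) (by fun_prop)
  convert isClosedMap_fst_of_compactSpace _ hclosed using 1
  ext x
  simp only [segment_eq_image_lineMap]
  constructor
  · rintro ⟨-, ⟨s, hs, rfl⟩, t, ht, hst⟩
    exact ⟨(x, ⟨s, hs⟩, ⟨t, ht⟩), hst.symm, rfl⟩
  · rintro ⟨⟨x, ⟨s, hs⟩, ⟨t, ht⟩⟩, hst, rfl⟩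
    exact ⟨_, ⟨s, hs, rfl⟩, t, ht, hst.symm⟩

theorem eventually_disjoint_segment {ι : Type*} {l : Filter ι} {a b c d : E}
    {an bn cn dn : ι → E} (ha : Tendsto an l (𝓝 a)) (hb : Tendsto bn l (𝓝 b))
    (hc : Tendsto cn l (𝓝 c)) (hd : Tendsto dn l (𝓝 d))
    (h : Disjoint (segment ℝ a b) (segment ℝ c d)) :
    ∀ᶠ n in l, Disjoint (segment ℝ (an n) (bn n)) (segment ℝ (cn n) (dn n)) := by
  simp only [Set.disjoint_iff_inter_eq_empty, ← Set.not_nonempty_iff_eq_empty] at h ⊢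
  exact ((ha.prodMk_nhds hb).prodMk_nhds (hc.prodMk_nhds hd)).eventually
    (isClosed_setOf_segment_inter_nonempty.isOpen_compl.mem_nhds h)

theorem segment_subset_openSegment_of_sub_eq_smul {a b w : E} {c δ : ℝ} (hc : 0 ≤ c)
    (hδ : 0 < δ) (h : b - a = c • w) :
    segment ℝ a b ⊆ openSegment ℝ (a - δ • w) (b + δ • w) := by
  obtain ⟨f, hf⟩ : ∃ f : ℝ →ᵃ[ℝ] E, ∀ t, f t = a + t • w :=
    ⟨lineMap a (a + w), fun t => by simp [lineMap_apply_module', add_comm]⟩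
  have ha : f 0 = a := by simp [hf]
  have hb : f c = b := by rw [hf, ← h]; abel
  have ha' : f (-δ) = a - δ • w := by rw [hf, neg_smul, sub_eq_add_neg]
  have hb' : f (c + δ) = b + δ • w := by rw [hf, add_smul, ← h]; abel
  rw [← ha', ← hb', ← hb, ← ha, ← image_segment, ← image_openSegment, segment_eq_Icc hc,
    openSegment_eq_Ioo (by linarith)]
  exact image_mono (Icc_subset_Ioo (by linarith) (by linarith))

theorem exists_sub_eq_nonneg_smul [Nontrivial E] (a b : E) :
    ∃ w ≠ (0 : E), ∃ c : ℝ, 0 ≤ c ∧ b - a = c • w := by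
  by_cases hab : a = b
  · obtain ⟨w, hw⟩ := exists_ne (0 : E)
    exact ⟨w, hw, 0, le_rfl, by simp [hab]⟩
  · exact ⟨b - a, sub_ne_zero.2 (Ne.symm hab), 1, zero_le_one, (one_smul _ _).symm⟩

theorem eventually_mem_segment {ι : Type*} {l : Filter ι} {x y r : ℝ} {xn yn : ι → ℝ}
    (hx : Tendsto xn l (𝓝 x)) (hy : Tendsto yn l (𝓝 y)) (hxy : x ≠ y)
    (hr : r ∈ openSegment ℝ x y) : ∀ᶠ n in l, r ∈ segment ℝ (xn n) (yn n) := by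
  rw [openSegment_eq_Ioo' hxy] at hr
  filter_upwards [(hx.min hy).eventually (gt_mem_nhds hr.1),
    (hx.max hy).eventually (lt_mem_nhds hr.2)] with n h1 h2
  rw [segment_eq_Icc']
  exact ⟨h1.le, h2.le⟩

theorem eventually_segment_lineMap_inter_nonempty {ι : Type*} {l : Filter ι}
    {s₁ s₂ t₁ t₂ : ℝ} {s₁n s₂n t₁n t₂n : ι → ℝ} (hs₁ : Tendsto s₁n l (𝓝 s₁))
    (hs₂ : Tendsto s₂n l (𝓝 s₂)) (ht₁ : Tendsto t₁n l (𝓝 t₁)) (ht₂ : Tendsto t₂n l (𝓝 t₂))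
    (hs : s₁ ≠ s₂) (ht : t₁ ≠ t₂) (h : (openSegment ℝ s₁ s₂ ∩ openSegment ℝ t₁ t₂).Nonempty)
    (p q : ι → E) :
    ∀ᶠ n in l, (segment ℝ (lineMap (p n) (q n) (s₁n n)) (lineMap (p n) (q n) (s₂n n)) ∩
      segment ℝ (lineMap (p n) (q n) (t₁n n)) (lineMap (p n) (q n) (t₂n n))).Nonempty := by
  obtain ⟨r, hrs, hrt⟩ := h
  filter_upwards [eventually_mem_segment hs₁ hs₂ hs hrs, eventually_mem_segment ht₁ ht₂ ht hrt]
    with n h1 h2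
  simp only [← image_segment]
  exact ⟨_, mem_image_of_mem _ h1, mem_image_of_mem _ h2⟩

theorem openSegment_inter_nonempty_of_lineMap {p q : E} (hpq : p ≠ q) {s₁ s₂ t₁ t₂ : ℝ}
    (h : (openSegment ℝ (lineMap p q s₁) (lineMap p q s₂) ∩
      openSegment ℝ (lineMap p q t₁) (lineMap p q t₂)).Nonempty) :
    (openSegment ℝ s₁ s₂ ∩ openSegment ℝ t₁ t₂).Nonempty := by
  rwa [← image_openSegment, ← image_openSegment, ← image_inter (lineMap_injective ℝ hpq),
    image_nonempty] at h

theorem exists_lineMap_params {V : Type*} (a b : V → E) (hab : ∀ v, a v ≠ b v) :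
    ∃ (P Q : V → E) (t₁ t₂ : V → ℝ), (∀ v, P v ≠ Q v) ∧
      (∀ v, lineMap (P v) (Q v) (t₁ v) = a v ∧ lineMap (P v) (Q v) (t₂ v) = b v) ∧
      ∀ u v, line[ℝ, a u, b u] = line[ℝ, a v, b v] → P u = P v ∧ Q u = Q v := by
  let L : V → AffineSubspace ℝ E := fun v => line[ℝ, a v, b v]
  let r : V → V := fun v => (⟦v⟧ : Quotient (Setoid.ker L)).out
  have hpar : ∀ v, ∀ x ∈ L v, ∃ t : ℝ, lineMap (a (r v)) (b (r v)) t = x := fun v x hx => by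
    rw [← mem_affineSpan_pair_iff_exists_lineMap_eq]
    rwa [← Setoid.ker_apply_mk_out (f := L) v] at hx
  choose t₁ ht₁ using fun v => hpar v (a v) (left_mem_affineSpan_pair ℝ _ _)
  choose t₂ ht₂ using fun v => hpar v (b v) (right_mem_affineSpan_pair ℝ _ _)
  refine ⟨a ∘ r, b ∘ r, t₁, t₂, fun v => hab (r v), fun v => ⟨ht₁ v, ht₂ v⟩, fun u v huv => ?_⟩
  have hr : r u = r v := congrArg Quotient.out (Quotient.sound huv)
  simp [hr]

end Segments

def cross (x y : ℝ × ℝ) : ℝ := x.1 * y.2 - x.2 * y.1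

theorem Filter.Tendsto.cross {ι : Type*} {l : Filter ι} {x y : ℝ × ℝ} {xn yn : ι → ℝ × ℝ}
    (hx : Tendsto xn l (𝓝 x)) (hy : Tendsto yn l (𝓝 y)) :
    Tendsto (fun n => _root_.cross (xn n) (yn n)) l (𝓝 (_root_.cross x y)) := by
  have hcont : Continuous fun z : (ℝ × ℝ) × (ℝ × ℝ) => _root_.cross z.1 z.2 := by
    unfold _root_.cross; fun_prop
  exact (hcont.tendsto _).comp (hx.prodMk_nhds hy)

theorem exists_eq_smul_of_cross_eq_zero {x y : ℝ × ℝ} (hx : x ≠ 0) (h : cross x y = 0) :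
    ∃ k : ℝ, y = k • x := by
  obtain ⟨x₁, x₂⟩ := x
  obtain ⟨y₁, y₂⟩ := y
  simp only [cross] at h
  by_cases h₁ : x₁ = 0
  · have h₂ : x₂ ≠ 0 := by rintro rfl; exact hx (by rw [h₁]; rfl)
    subst h₁
    refine ⟨y₂ / x₂, Prod.ext ?_ ?_⟩
    · simpa [h₂] using h
    · simp [h₂]
  · refine ⟨y₁ / x₁, Prod.ext ?_ ?_⟩
    · simp [h₁]
    · simp only [Prod.smul_mk, smul_eq_mul]
      field_simp
      linear_combination h

theorem cross_mul_eq_of_lineMap_eq {a b c d : ℝ × ℝ} {s t : ℝ}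
    (h : lineMap a b s = lineMap c d t) :
    s * cross (b - a) (d - c) = cross (c - a) (d - c) ∧
      t * cross (b - a) (d - c) = cross (c - a) (b - a) := by
  simp only [lineMap_apply_module', Prod.ext_iff, Prod.fst_add, Prod.snd_add, Prod.smul_fst,
    Prod.smul_snd, Prod.fst_sub, Prod.snd_sub, smul_eq_mul] at h
  simp only [cross, Prod.fst_sub, Prod.snd_sub]
  constructor
  · linear_combination (d.2 - c.2) * h.1 - (d.1 - c.1) * h.2
  · linear_combination (b.2 - a.2) * h.1 - (b.1 - a.1) * h.2

-- Cramer's rule for the intersection point of the lines `ab` and `cd`.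
theorem lineMap_eq_lineMap_of_cross_ne_zero {a b c d : ℝ × ℝ} (h : cross (b - a) (d - c) ≠ 0) :
    lineMap a b (cross (c - a) (d - c) / cross (b - a) (d - c)) =
      lineMap c d (cross (c - a) (b - a) / cross (b - a) (d - c)) := by
  set D := cross (b - a) (d - c) with hD
  ext <;> simp only [lineMap_apply_module', Prod.fst_add, Prod.snd_add, Prod.smul_fst,
    Prod.smul_snd, Prod.fst_sub, Prod.snd_sub, smul_eq_mul] <;> field_simp <;>
    simp only [hD, cross, Prod.fst_sub, Prod.snd_sub] <;> ring

theorem mem_affineSpan_pair_of_cross_eq_zero {a b p : ℝ × ℝ} (hab : a ≠ b)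
    (h : cross (b - a) (p - a) = 0) : p ∈ line[ℝ, a, b] := by
  obtain ⟨k, hk⟩ := exists_eq_smul_of_cross_eq_zero (sub_ne_zero.2 hab.symm) h
  rw [mem_affineSpan_pair_iff_exists_lineMap_eq]
  exact ⟨k, by rw [lineMap_apply_module', ← hk, sub_add_cancel]⟩

theorem affineSpan_pair_eq_of_cross_eq_zero {a b c d : ℝ × ℝ} {s t : ℝ} (hab : a ≠ b)
    (hcd : c ≠ d) (h : lineMap a b s = lineMap c d t) (hcross : cross (b - a) (d - c) = 0) :
    line[ℝ, a, b] = line[ℝ, c, d] := by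
  obtain ⟨hs, ht⟩ := cross_mul_eq_of_lineMap_eq h
  rw [hcross, mul_zero] at hs ht
  simp only [cross, Prod.fst_sub, Prod.snd_sub] at hs ht hcross
  apply le_antisymm <;> apply affineSpan_pair_le_of_mem_of_mem <;>
    apply mem_affineSpan_pair_of_cross_eq_zero ‹_› <;>
    simp only [cross, Prod.fst_sub, Prod.snd_sub] <;> linarith

theorem eventually_segment_inter_nonempty_of_cross_ne_zero {ι : Type*} {l : Filter ι}
    {a b c d : ℝ × ℝ} {an bn cn dn : ι → ℝ × ℝ} (ha : Tendsto an l (𝓝 a))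
    (hb : Tendsto bn l (𝓝 b)) (hc : Tendsto cn l (𝓝 c)) (hd : Tendsto dn l (𝓝 d))
    (hcross : cross (b - a) (d - c) ≠ 0) (h : (openSegment ℝ a b ∩ openSegment ℝ c d).Nonempty) :
    ∀ᶠ n in l, (segment ℝ (an n) (bn n) ∩ segment ℝ (cn n) (dn n)).Nonempty := by
  obtain ⟨-, ⟨s, hs, rfl⟩, t, ht, hst⟩ := by simpa only [openSegment_eq_image_lineMap] using h
  obtain ⟨hs', ht'⟩ := cross_mul_eq_of_lineMap_eq hst.symm
  have hdet := (hb.sub ha).cross (hd.sub hc)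
  have hσ := ((hc.sub ha).cross (hd.sub hc)).div hdet hcross
  have hτ := ((hc.sub ha).cross (hb.sub ha)).div hdet hcross
  rw [← hs', mul_div_cancel_right₀ _ hcross] at hσ
  rw [← ht', mul_div_cancel_right₀ _ hcross] at hτ
  filter_upwards [hdet.eventually_ne hcross, hσ.eventually (Icc_mem_nhds hs.1 hs.2),
    hτ.eventually (Icc_mem_nhds ht.1 ht.2)] with n hn hσn hτn
  rw [segment_eq_image_lineMap, segment_eq_image_lineMap]
  exact ⟨_, mem_image_of_mem _ hσn,
    (lineMap_eq_lineMap_of_cross_ne_zero hn).symm ▸ mem_image_of_mem _ hτn⟩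

section Representation

variable {V : Type*} {G : SimpleGraph V} {f : V → (ℝ × ℝ) × (ℝ × ℝ)}

theorem IsSegRep.disjoint (hf : IsSegRep G f) {u v : V} (huv : u ≠ v) (hadj : ¬ G.Adj u v) :
    Disjoint (segOf (f u)) (segOf (f v)) := by
  rw [Set.disjoint_iff_inter_eq_empty, ← Set.not_nonempty_iff_eq_empty, hf u v huv]
  exact hadj

theorem isSegRep_of_forall
    (hadj : ∀ u v, u ≠ v → G.Adj u v → (segOf (f u) ∩ segOf (f v)).Nonempty)
    (hnadj : ∀ u v, u ≠ v → ¬ G.Adj u v → Disjoint (segOf (f u)) (segOf (f v))) :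
    IsSegRep G f := fun u v huv =>
  ⟨fun h => by_contra fun hn => not_disjoint_iff_nonempty_inter.2 h (hnadj u v huv hn),
    hadj u v huv⟩

theorem IsSegRep.smul (hf : IsSegRep G f) {c : ℝ} (hc : c ≠ 0) :
    IsSegRep G fun v => (c • (f v).1, c • (f v).2) := by
  have himage : ∀ x y : ℝ × ℝ, segment ℝ (c • x) (c • y) = (c • ·) '' segment ℝ x y :=
    fun x y => by
      have := (image_segment ℝ ((c • LinearMap.id : (ℝ × ℝ) →ₗ[ℝ] ℝ × ℝ).toAffineMap) x y).symm
      simpa only [LinearMap.coe_toAffineMap, LinearMap.smul_apply, LinearMap.id_apply] using this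
  intro u v huv
  simp only [segOf, himage, ← image_inter (smul_right_injective _ hc), image_nonempty]
  exact hf u v huv

theorem IsSegRep.exists_nondegenerate [Finite V] (hf : IsSegRep G f) :
    ∃ a b : V → ℝ × ℝ, (∀ v, a v ≠ b v) ∧ IsSegRep G (fun v => (a v, b v)) ∧
      ∀ u v, u ≠ v → G.Adj u v →
        (openSegment ℝ (a u) (b u) ∩ openSegment ℝ (a v) (b v)).Nonempty := by
  choose w hw c hc hcw using fun v => exists_sub_eq_nonneg_smul (f v).1 (f v).2
  have hδ₀ : Tendsto (fun δ : ℝ => δ) (𝓝[>] 0) (𝓝 0) :=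
    tendsto_nhdsWithin_of_tendsto_nhds tendsto_id
  have hlim₁ : ∀ v, Tendsto (fun δ : ℝ => (f v).1 - δ • w v) (𝓝[>] 0) (𝓝 (f v).1) := fun v => by
    simpa using tendsto_const_nhds.sub (hδ₀.smul_const (w v))
  have hlim₂ : ∀ v, Tendsto (fun δ : ℝ => (f v).2 + δ • w v) (𝓝[>] 0) (𝓝 (f v).2) := fun v => by
    simpa using tendsto_const_nhds.add (hδ₀.smul_const (w v))
  have hdisj : ∀ᶠ δ : ℝ in 𝓝[>] 0, ∀ u v, u ≠ v → ¬ G.Adj u v →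
      Disjoint (segment ℝ ((f u).1 - δ • w u) ((f u).2 + δ • w u))
        (segment ℝ ((f v).1 - δ • w v) ((f v).2 + δ • w v)) := by
    refine eventually_all.2 fun u => eventually_all.2 fun v => ?_
    simp only [eventually_imp_distrib_left]
    exact fun huv hadj => eventually_disjoint_segment (hlim₁ u) (hlim₂ u) (hlim₁ v) (hlim₂ v)
      (hf.disjoint huv hadj)
  obtain ⟨δ, hδdisj, hδ⟩ := (hdisj.and self_mem_nhdsWithin).exists
  have hsub : ∀ v, segOf (f v) ⊆ openSegment ℝ ((f v).1 - δ • w v) ((f v).2 + δ • w v) :=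
    fun v => segment_subset_openSegment_of_sub_eq_smul (hc v) hδ (hcw v)
  refine ⟨fun v => (f v).1 - δ • w v, fun v => (f v).2 + δ • w v, fun v heq => ?_,
    isSegRep_of_forall (fun u v huv hadj => ?_) hδdisj, fun u v huv hadj => ?_⟩
  · have hdiff : (f v).2 + δ • w v - ((f v).1 - δ • w v) = (c v + 2 * δ) • w v := by
      rw [add_smul, ← hcw v]; module
    rw [show (f v).1 - δ • w v = (f v).2 + δ • w v from heq, sub_self, eq_comm,
      smul_eq_zero] at hdiff
    exact hdiff.elim (fun h => by linarith [hc v, hδ]) (hw v)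
  · exact ((hf u v huv).2 hadj).mono (inter_subset_inter
      ((hsub u).trans (openSegment_subset_segment ..))
      ((hsub v).trans (openSegment_subset_segment ..)))
  · exact ((hf u v huv).2 hadj).mono (inter_subset_inter (hsub u) (hsub v))

theorem exists_lineMap_params_eventually_isSegRep [Finite V] {a b : V → ℝ × ℝ}
    (hab : ∀ v, a v ≠ b v) (hrep : IsSegRep G fun v => (a v, b v))
    (hopen : ∀ u v, u ≠ v → G.Adj u v →
      (openSegment ℝ (a u) (b u) ∩ openSegment ℝ (a v) (b v)).Nonempty)
    {ι : Type*} {l : Filter ι} {F : ι → ℝ × ℝ → ℝ × ℝ} {R : ι → ℝ → ℝ}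
    (hF : ∀ x, Tendsto (F · x) l (𝓝 x)) (hR : ∀ t, Tendsto (R · t) l (𝓝 t)) :
    ∃ (P Q : V → ℝ × ℝ) (t₁ t₂ : V → ℝ), ∀ᶠ n in l, IsSegRep G fun v =>
      (lineMap (F n (P v)) (F n (Q v)) (R n (t₁ v)),
        lineMap (F n (P v)) (F n (Q v)) (R n (t₂ v))) := by
  obtain ⟨P, Q, t₁, t₂, hPQ, hpar, hline⟩ := exists_lineMap_params a b hab
  refine ⟨P, Q, t₁, t₂, ?_⟩
  have ha : ∀ v, Tendsto (fun n => lineMap (F n (P v)) (F n (Q v)) (R n (t₁ v))) l (𝓝 (a v)) :=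
    fun v => (hpar v).1 ▸ (hF _).lineMap (hF _) (hR _)
  have hb : ∀ v, Tendsto (fun n => lineMap (F n (P v)) (F n (Q v)) (R n (t₂ v))) l (𝓝 (b v)) :=
    fun v => (hpar v).2 ▸ (hF _).lineMap (hF _) (hR _)
  have ht : ∀ v, t₁ v ≠ t₂ v := fun v h => hab v (by rw [← (hpar v).1, ← (hpar v).2, h])
  set fn : ι → V → (ℝ × ℝ) × (ℝ × ℝ) := fun n v =>
    (lineMap (F n (P v)) (F n (Q v)) (R n (t₁ v)), lineMap (F n (P v)) (F n (Q v)) (R n (t₂ v)))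
  have hpair : ∀ u v, u ≠ v → ∀ᶠ n in l,
      (G.Adj u v → (segOf (fn n u) ∩ segOf (fn n v)).Nonempty) ∧
        (¬ G.Adj u v → Disjoint (segOf (fn n u)) (segOf (fn n v))) := by
    intro u v huv
    by_cases hadj : G.Adj u v
    · suffices h : ∀ᶠ n in l, (segOf (fn n u) ∩ segOf (fn n v)).Nonempty from
        h.mono fun n hn => ⟨fun _ => hn, absurd hadj⟩
      by_cases hL : line[ℝ, a u, b u] = line[ℝ, a v, b v]
      · obtain ⟨hP, hQ⟩ := hline u v hL
        have hparam := hopen u v huv hadj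
        rw [← (hpar u).1, ← (hpar u).2, ← (hpar v).1, ← (hpar v).2, ← hP, ← hQ] at hparam
        filter_upwards [eventually_segment_lineMap_inter_nonempty (hR _) (hR _) (hR _) (hR _)
          (ht u) (ht v) (openSegment_inter_nonempty_of_lineMap (hPQ u) hparam)
          (fun n => F n (P u)) (fun n => F n (Q u))] with n hn
        simpa only [fn, segOf, hP, hQ] using hn
      · obtain ⟨_, ⟨s, -, hs⟩, t, -, hts⟩ := by
          simpa only [openSegment_eq_image_lineMap] using hopen u v huv hadj
        exact eventually_segment_inter_nonempty_of_cross_ne_zero (ha u) (hb u) (ha v) (hb v)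
          (fun h0 => hL (affineSpan_pair_eq_of_cross_eq_zero (hab u) (hab v)
            (hs.trans hts.symm) h0))
          (hopen u v huv hadj)
    · filter_upwards [eventually_disjoint_segment (ha u) (hb u) (ha v) (hb v)
        (hrep.disjoint huv hadj)] with n hn
      exact ⟨fun h => absurd h hadj, fun _ => hn⟩
  have hall := eventually_all.2 fun u => eventually_all.2 fun v =>
    eventually_imp_distrib_left.2 (hpair u v)
  exact hall.mono fun n hn => isSegRep_of_forall (fun u v huv => (hn u v huv).1)
    (fun u v huv => (hn u v huv).2)

end Representation

noncomputable def gridApprox (n : ℕ) (x : ℝ) : ℝ := round (n * x) / n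

noncomputable def gridApprox₂ (n : ℕ) (p : ℝ × ℝ) : ℝ × ℝ := (gridApprox n p.1, gridApprox n p.2)

theorem tendsto_gridApprox (x : ℝ) : Tendsto (gridApprox · x) atTop (𝓝 x) := by
  have hbound : ∀ n : ℕ, 0 < n → |gridApprox n x - x| ≤ 1 / n := fun n hn => by
    have hn' : (0 : ℝ) < n := Nat.cast_pos.2 hn
    rw [gridApprox, div_sub' hn'.ne', abs_div, abs_of_pos hn', abs_sub_comm]
    gcongr
    linarith [abs_sub_round (n * x)]
  rw [tendsto_iff_norm_sub_tendsto_zero]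
  refine squeeze_zero' (Eventually.of_forall fun _ => norm_nonneg _) ?_
    tendsto_one_div_atTop_nhds_zero_nat
  filter_upwards [eventually_gt_atTop 0] with n hn using hbound n hn

theorem tendsto_gridApprox₂ (p : ℝ × ℝ) : Tendsto (gridApprox₂ · p) atTop (𝓝 p) :=
  (tendsto_gridApprox p.1).prodMk_nhds (tendsto_gridApprox p.2)

noncomputable def roundLineMap (n : ℕ) (p q : ℝ × ℝ) (t : ℝ) : ℤ × ℤ :=
  (n * round (n * p.1) + round (n * t) * (round (n * q.1) - round (n * p.1)),
    n * round (n * p.2) + round (n * t) * (round (n * q.2) - round (n * p.2)))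

theorem cast_roundLineMap {n : ℕ} (hn : n ≠ 0) (p q : ℝ × ℝ) (t : ℝ) :
    (((roundLineMap n p q t).1 : ℝ), ((roundLineMap n p q t).2 : ℝ)) =
      ((n : ℝ) ^ 2) • lineMap (gridApprox₂ n p) (gridApprox₂ n q) (gridApprox n t) := by
  have hn' : (n : ℝ) ≠ 0 := Nat.cast_ne_zero.2 hn
  ext <;> simp only [roundLineMap, gridApprox₂, gridApprox, lineMap_apply_module', Prod.smul_fst,
    Prod.smul_snd, Prod.fst_add, Prod.snd_add, Prod.fst_sub, Prod.snd_sub, smul_eq_mul] <;>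
    push_cast <;> field_simp <;> ring

theorem stmt9 {V : Type*} [Fintype V] (G : SimpleGraph V) (h : IsSegGraph G) :
    ∃ g : V → (ℤ × ℤ) × (ℤ × ℤ), IsSegRep G (fun v => intPts (g v)) := by
  obtain ⟨f, hf⟩ := h
  obtain ⟨a, b, hab, hrep, hopen⟩ := hf.exists_nondegenerate
  obtain ⟨P, Q, t₁, t₂, hev⟩ := exists_lineMap_params_eventually_isSegRep hab hrep hopen
    tendsto_gridApprox₂ tendsto_gridApprox
  obtain ⟨n, hn, hn₀⟩ := (hev.and (eventually_ne_atTop 0)).exists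
  refine ⟨fun v => (roundLineMap n (P v) (Q v) (t₁ v), roundLineMap n (P v) (Q v) (t₂ v)), ?_⟩
  simp only [intPts, cast_roundLineMap hn₀]
  exact hn.smul (pow_ne_zero 2 (Nat.cast_ne_zero.2 hn₀))
end

section
/- Let p₁, …, p_m be nonzero univariate real polynomials with deg p_i = d_i, and for a sign vector σ ∈ {−1, 0, +1}^m let S_σ = {x ∈ ℝ : sgn(p_i(x)) = σ_i for all i}. Then for every set Σ ⊆ {−1, 0, +1}^m, the set S = ⋃_{σ ∈ Σ} S_σ has at most 2·(d₁ + ⋯ + d_m) + 1 connected components. -/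
/-! The roots `Z` of the `pᵢ` cut `ℝ` into `#Z` points and `#Z + 1` open gaps, and by the
intermediate value theorem every `pᵢ` has constant sign on each gap. So `S` is a union of these
cells, and two points of `S` in the same cell are joined by a segment inside `S`. Labelling the
points of `S` by their cell thus injects the components of `S` into a set of
`2 * #Z + 1 ≤ 2 * ∑ dᵢ + 1` labels. -/

open Finset

theorem IsPreconnected.sign_eq {s : Set ℝ} {f : ℝ → ℝ} (hs : IsPreconnected s)
    (hf : ContinuousOn f s) (h0 : ∀ t ∈ s, f t ≠ 0) {a b : ℝ} (ha : a ∈ s) (hb : b ∈ s) :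
    SignType.sign (f a) = SignType.sign (f b) := by
  have no_root_between : ∀ {a b}, a ∈ s → b ∈ s → ¬(f a < 0 ∧ 0 < f b) := by
    rintro a b ha hb ⟨hfa, hfb⟩
    obtain ⟨t, ht, hft⟩ := hs.intermediate_value ha hb hf ⟨hfa.le, hfb.le⟩
    exact h0 t ht hft
  rcases (h0 a ha).lt_or_gt with hfa | hfa <;> rcases (h0 b hb).lt_or_gt with hfb | hfb
  · rw [sign_neg hfa, sign_neg hfb]
  · exact (no_root_between ha hb ⟨hfa, hfb⟩).elim
  · exact (no_root_between hb ha ⟨hfb, hfa⟩).elim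
  · rw [sign_pos hfa, sign_pos hfb]

theorem Finset.card_filter_lt_lt_card_filter_lt {α : Type*} [LinearOrder α] {Z : Finset α}
    {x y z : α} (hz : z ∈ Z) (hxz : x ≤ z) (hzy : z < y) :
    #(Z.filter (· < x)) < #(Z.filter (· < y)) := by
  refine card_lt_card <| (ssubset_iff_of_subset ?_).2 ⟨z, ?_, ?_⟩
  · exact monotone_filter_right Z fun t _ (htx : t < x) => htx.trans_le (hxz.trans hzy.le)
  · simp [hz, hzy]
  · simp [hxz]

theorem Finset.notMem_uIcc_of_card_filter_lt_eq {α : Type*} [LinearOrder α] {Z : Finset α}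
    {x y : α} (hx : x ∉ Z) (hy : y ∉ Z) (h : #(Z.filter (· < x)) = #(Z.filter (· < y))) :
    ∀ z ∈ Z, z ∉ Set.uIcc x y := by
  intro z hz hzxy
  have hzy : z ≠ y := ne_of_mem_of_not_mem hz hy
  have hzx : z ≠ x := ne_of_mem_of_not_mem hz hx
  rcases le_total x y with hxy | hyx
  · rw [Set.uIcc_of_le hxy] at hzxy
    exact (card_filter_lt_lt_card_filter_lt hz hzxy.1 (hzxy.2.lt_of_ne hzy)).ne h
  · rw [Set.uIcc_of_ge hyx] at hzxy
    exact (card_filter_lt_lt_card_filter_lt hz hzxy.1 (hzxy.2.lt_of_ne hzx)).ne' h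

theorem ConnectedComponents.finite_and_card_le_of_label {X L : Type*} [TopologicalSpace X]
    [Finite L] (f : X → L) (hf : ∀ a b, f a = f b → (a : ConnectedComponents X) = b) :
    Finite (ConnectedComponents X) ∧ Nat.card (ConnectedComponents X) ≤ Nat.card L := by
  have hinj : Function.Injective (f ∘ Function.surjInv surjective_coe) := fun c c' h => by
    simpa only [Function.surjInv_eq] using hf _ _ h
  exact ⟨Finite.of_injective _ hinj, Nat.card_le_card_of_injective _ hinj⟩

theorem connectedComponent_eq_of_uIcc_subset {S : Set ℝ} {x y : S}
    (h : Set.uIcc (x : ℝ) y ⊆ S) :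
    connectedComponent x = connectedComponent y := by
  have hpre : IsPreconnected (Subtype.val ⁻¹' Set.uIcc (x : ℝ) y : Set S) := by
    rw [← Topology.IsInducing.subtypeVal.isPreconnected_image, Subtype.image_preimage_coe,
      Set.inter_eq_right.2 h]
    exact isPreconnected_uIcc
  exact connectedComponent_eq <|
    hpre.subset_connectedComponent Set.left_mem_uIcc Set.right_mem_uIcc

def Finset.cellLabel {α : Type*} [LinearOrder α] (Z : Finset α) (x : α) : Z ⊕ Fin (#Z + 1) :=
  if h : x ∈ Z then .inl ⟨x, h⟩
  else .inr ⟨#(Z.filter (· < x)), Nat.lt_succ_of_le (card_filter_le _ _)⟩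

theorem Finset.eq_or_forall_notMem_uIcc_of_cellLabel_eq {α : Type*} [LinearOrder α]
    {Z : Finset α} {x y : α} (h : Z.cellLabel x = Z.cellLabel y) :
    x = y ∨ ∀ z ∈ Z, z ∉ Set.uIcc x y := by
  unfold cellLabel at h
  by_cases hx : x ∈ Z <;> by_cases hy : y ∈ Z <;> simp only [hx, hy, dite_true, dite_false] at h
  · exact .inl (congrArg Subtype.val (Sum.inl_injective h))
  · exact (Sum.inl_ne_inr h).elim
  · exact (Sum.inr_ne_inl h).elim
  · exact .inr (notMem_uIcc_of_card_filter_lt_eq hx hy (congrArg Fin.val (Sum.inr_injective h)))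

theorem finite_connectedComponents_and_card_le_two_mul_card_add_one {Z : Finset ℝ} {S : Set ℝ}
    (hS : ∀ x ∈ S, ∀ y, (∀ z ∈ Z, z ∉ Set.uIcc x y) → y ∈ S) :
    Finite (ConnectedComponents S) ∧ Nat.card (ConnectedComponents S) ≤ 2 * #Z + 1 := by
  have hcard : Nat.card (Z ⊕ Fin (#Z + 1)) = 2 * #Z + 1 := by simp [two_mul, add_assoc]
  rw [← hcard]
  refine ConnectedComponents.finite_and_card_le_of_label (fun x : S => Z.cellLabel x) ?_
  intro x y hxy
  rw [ConnectedComponents.coe_eq_coe]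
  rcases eq_or_forall_notMem_uIcc_of_cellLabel_eq hxy with hxy | hxy
  · rw [Subtype.ext hxy]
  · refine connectedComponent_eq_of_uIcc_subset fun t ht => hS x x.2 t fun z hz hzt => ?_
    exact hxy z hz (Set.uIcc_subset_uIcc_left ht hzt)

theorem stmt11 (m : ℕ) (p : Fin m → Polynomial ℝ) (hp : ∀ i, p i ≠ 0)
    (d : Fin m → ℕ) (hd : ∀ i, (p i).natDegree = d i)
    (Sig : Set (Fin m → SignType))
    (S : Set ℝ)
    (hS : S = ⋃ σ ∈ Sig, {x : ℝ | ∀ i, SignType.sign ((p i).eval x) = σ i}) :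
    Finite (ConnectedComponents ↥S) ∧
      Nat.card (ConnectedComponents ↥S) ≤ 2 * (∑ i, d i) + 1 := by
  set Z : Finset ℝ := univ.biUnion fun i => (p i).roots.toFinset
  have hZ_card : #Z ≤ ∑ i, d i := card_biUnion_le.trans <| sum_le_sum fun i _ =>
    (Multiset.toFinset_card_le _).trans <| (p i).card_roots'.trans_eq (hd i)
  have hS_sat : ∀ x ∈ S, ∀ y, (∀ z ∈ Z, z ∉ Set.uIcc x y) → y ∈ S := by
    intro x hx y hxy
    rw [hS, Set.mem_iUnion₂] at hx ⊢
    obtain ⟨σ, hσ, hxσ⟩ := hx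
    refine ⟨σ, hσ, fun i => (hxσ i).symm ▸ ?_⟩
    refine isPreconnected_uIcc.sign_eq (p i).continuous.continuousOn (fun t ht ht0 => ?_)
      Set.right_mem_uIcc Set.left_mem_uIcc
    exact hxy t (mem_biUnion.2 ⟨i, mem_univ i, by simp [hp i, ht0]⟩) ht
  exact (finite_connectedComponents_and_card_le_two_mul_card_add_one hS_sat).imp_right
    fun h => h.trans (by omega)
end

section
/- There exists a bivariate polynomial p with integer coefficients such that p(x, y) > 0 for all (x, y) ∈ ℝ², and yet the infimum of p over ℝ² is 0; that is, for every ε > 0 there exists (x, y) ∈ ℝ² with p(x, y) < ε. -/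
/-!
Take `p = (x y - 1)² + x²`. The two squares never vanish together, since `x = 0` makes the first
one equal to `1`; but on the hyperbola `x y = 1` only `x²` remains, which tends to `0`.
-/

open MvPolynomial

theorem sq_mul_sub_one_add_sq_pos {R : Type*} [Ring R] [LinearOrder R] [IsStrictOrderedRing R]
    (x y : R) : 0 < (x * y - 1) ^ 2 + x ^ 2 := by
  rcases eq_or_ne x 0 with rfl | hx
  · norm_num
  · positivity

theorem sq_mul_inv_sub_one_add_sq {K : Type*} [Field K] {x : K} (hx : x ≠ 0) :
    (x * x⁻¹ - 1) ^ 2 + x ^ 2 = x ^ 2 := by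
  rw [mul_inv_cancel₀ hx, sub_self]
  ring

theorem exists_pos_sq_lt {K : Type*} [Field K] [LinearOrder K] [IsStrictOrderedRing K]
    {ε : K} (hε : 0 < ε) : ∃ x : K, 0 < x ∧ x ^ 2 < ε := by
  refine ⟨min 1 (ε / 2), by positivity, ?_⟩
  calc min 1 (ε / 2) ^ 2 ≤ min 1 (ε / 2) := by
        rw [sq]
        exact mul_le_of_le_one_left (by positivity) (min_le_left _ _)
    _ ≤ ε / 2 := min_le_right _ _
    _ < ε := half_lt_self hε

theorem stmt13 :
    ∃ p : MvPolynomial (Fin 2) ℤ,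
      (∀ x y : ℝ, 0 < aeval ![x, y] p) ∧
      ∀ ε : ℝ, 0 < ε → ∃ x y : ℝ, aeval ![x, y] p < ε := by
  have heval : ∀ x y : ℝ,
      aeval ![x, y] ((X 0 * X 1 - 1) ^ 2 + X 0 ^ 2 : MvPolynomial (Fin 2) ℤ) =
        (x * y - 1) ^ 2 + x ^ 2 := by
    intro x y
    simp
  refine ⟨(X 0 * X 1 - 1) ^ 2 + X 0 ^ 2, fun x y => ?_, fun ε hε => ?_⟩
  · rw [heval]
    exact sq_mul_sub_one_add_sq_pos x y
  · obtain ⟨x, hx, hxε⟩ := exists_pos_sq_lt hε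
    refine ⟨x, x⁻¹, ?_⟩
    rwa [heval, sq_mul_inv_sub_one_add_sq hx.ne']
end

section
/- For every finite set P of univariate polynomials with rational coefficients, there exists a finite set Q of univariate polynomials with rational coefficients such that P ⊆ Q, Q is closed under differentiation (if p ∈ Q then its derivative p′ ∈ Q), and Q is closed under taking remainders (if p, q ∈ Q with q ≠ 0, then the Euclidean remainder p mod q belongs to Q). -/
/-!
Close `P` under derivatives and remainders in rounds. A derivative or a remainder `p % q` that
differs from `p` and from `0` has smaller degree than every polynomial it was computed from. Hence
a nonzero polynomial of degree `n` that appears at all already appears after `M + 1 - n` rounds,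
where `M` bounds the degrees in `P`, and the union of all rounds is the finite set obtained after
`M + 1` rounds, together with `0`.
-/

open Polynomial

theorem Polynomial.natDegree_derivative_lt_of_ne_zero {R : Type*} [Semiring R] {p : R[X]}
    (h : derivative p ≠ 0) : (derivative p).natDegree < p.natDegree :=
  natDegree_derivative_lt fun hp => h (derivative_of_natDegree_zero hp)

section

variable {K : Type*} [Field K]

theorem Polynomial.mod_eq_self_or_natDegree_mod_lt {p q : K[X]} (h : p % q ≠ 0) :
    p % q = p ∨ (p % q).natDegree < q.natDegree ∧ q.natDegree ≤ p.natDegree := by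
  by_cases hq : q = 0
  · simp [hq]
  by_cases hpq : p.degree < q.degree
  · exact Or.inl ((mod_eq_self_iff hq).mpr hpq)
  refine Or.inr ⟨natDegree_lt_natDegree h (degree_mod_lt p hq), natDegree_le_natDegree ?_⟩
  exact not_lt.mp hpq

/-- `derivModStage P k` consists of the polynomials built from `P` by at most `k - 1` nested
derivatives and remainders. -/
def derivModStage (P : Set K[X]) : ℕ → Set K[X]
  | 0 => ∅
  | k + 1 => P ∪ derivModStage P k ∪ derivative '' derivModStage P k ∪
      Set.image2 (· % ·) (derivModStage P k) (derivModStage P k)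

variable (P : Set K[X])

theorem derivModStage_zero : derivModStage P 0 = ∅ := rfl

theorem subset_derivModStage_succ (k : ℕ) : P ⊆ derivModStage P (k + 1) := fun _ hx =>
  Or.inl (Or.inl (Or.inl hx))

theorem derivModStage_subset_succ (k : ℕ) : derivModStage P k ⊆ derivModStage P (k + 1) :=
  fun _ hx => Or.inl (Or.inl (Or.inr hx))

theorem derivative_mem_derivModStage_succ {k : ℕ} {p : K[X]} (hp : p ∈ derivModStage P k) :
    derivative p ∈ derivModStage P (k + 1) :=
  Or.inl (Or.inr (Set.mem_image_of_mem _ hp))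

theorem mod_mem_derivModStage_succ {k : ℕ} {p q : K[X]} (hp : p ∈ derivModStage P k)
    (hq : q ∈ derivModStage P k) : p % q ∈ derivModStage P (k + 1) :=
  Or.inr (Set.mem_image2_of_mem hp hq)

theorem derivModStage_mono : Monotone (derivModStage P) :=
  monotone_nat_of_le_succ (derivModStage_subset_succ P)

theorem derivModStage_finite (hP : P.Finite) (k : ℕ) : (derivModStage P k).Finite := by
  induction k with
  | zero => exact Set.finite_empty
  | succ k ih => exact ((hP.union ih).union (ih.image _)).union (ih.image2 _ ih)

variable {P} {M : ℕ}

theorem natDegree_le_of_mem_derivModStage {x : K[X]}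
    (hx : x ∈ derivModStage P (M + 1 - x.natDegree)) : x.natDegree ≤ M := by
  by_contra! h
  rwa [Nat.sub_eq_zero_of_le h, derivModStage_zero] at hx

theorem mem_derivModStage_of_natDegree_le (hP : ∀ p ∈ P, p.natDegree ≤ M) {k : ℕ} {x : K[X]}
    (hx : x ∈ derivModStage P k) : x = 0 ∨ x ∈ derivModStage P (M + 1 - x.natDegree) := by
  induction k generalizing x with
  | zero => exact absurd hx (Set.notMem_empty x)
  | succ k ih =>
    by_cases hx0 : x = 0
    · exact Or.inl hx0
    refine Or.inr ?_
    rcases hx with ((hxP | hxk) | ⟨p, hp, rfl⟩) | ⟨p, hp, q, hq, rfl⟩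
    · exact derivModStage_mono P (by have := hP x hxP; omega) (subset_derivModStage_succ P 0 hxP)
    · exact (ih hxk).resolve_left hx0
    · have hp' := (ih hp).resolve_left fun h => hx0 (by rw [h, derivative_zero])
      have hlt := natDegree_derivative_lt_of_ne_zero hx0
      have hle := natDegree_le_of_mem_derivModStage hp'
      exact derivModStage_mono P (by omega) (derivative_mem_derivModStage_succ P hp')
    · dsimp only at hx0 ⊢
      rcases mod_eq_self_or_natDegree_mod_lt hx0 with hself | ⟨hltq, hqp⟩
      · rw [hself]
        exact (ih hp).resolve_left fun h => hx0 (by rw [hself, h])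
      have hp' := (ih hp).resolve_left (ne_zero_of_natDegree_gt (hltq.trans_le hqp))
      have hq' := (ih hq).resolve_left (ne_zero_of_natDegree_gt hltq)
      have hqM := natDegree_le_of_mem_derivModStage hq'
      have hstage : M + 1 - (p % q).natDegree = (M - (p % q).natDegree) + 1 := by omega
      rw [hstage]
      exact mod_mem_derivModStage_succ P (derivModStage_mono P (by omega) hp')
        (derivModStage_mono P (by omega) hq')

end

theorem stmt14 (P : Set (Polynomial ℚ)) (hP : P.Finite) :
    ∃ Q : Set (Polynomial ℚ), Q.Finite ∧ P ⊆ Q ∧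
      (∀ p ∈ Q, derivative p ∈ Q) ∧
      (∀ p ∈ Q, ∀ q ∈ Q, q ≠ 0 → p % q ∈ Q) := by
  obtain ⟨M, hM⟩ := (hP.image natDegree).bddAbove
  have hdeg : ∀ p ∈ P, p.natDegree ≤ M := fun p hp => hM (Set.mem_image_of_mem _ hp)
  refine ⟨⋃ k, derivModStage P k, ?finite, ?base, ?derivative, ?mod⟩
  case finite =>
    refine ((derivModStage_finite P hP (M + 1)).union (Set.finite_singleton 0)).subset ?_
    rintro x ⟨_, ⟨k, rfl⟩, hx⟩
    rcases mem_derivModStage_of_natDegree_le hdeg hx with h0 | hx'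
    · exact Or.inr h0
    · exact Or.inl (derivModStage_mono P (Nat.sub_le _ _) hx')
  case base => exact (subset_derivModStage_succ P 0).trans (Set.subset_iUnion _ 1)
  case derivative =>
    simp only [Set.mem_iUnion]
    exact fun p ⟨k, hp⟩ => ⟨k + 1, derivative_mem_derivModStage_succ P hp⟩
  case mod =>
    simp only [Set.mem_iUnion]
    exact fun p ⟨k, hp⟩ q ⟨l, hq⟩ _ => ⟨max k l + 1, mod_mem_derivModStage_succ P
      (derivModStage_mono P (le_max_left k l) hp) (derivModStage_mono P (le_max_right k l) hq)⟩
end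

section
/- Let x₁, …, x_m be points in ℝ², let i, j, k ∈ {1, …, m} be indices such that x_i, x_j, x_k are affinely independent, and let ρ, σ ∈ {−1, +1}. For ε > 0 set x(ε) = x_i + ρ·ε·(x_j − x_i) + σ·ε²·(x_k − x_i). Then there exists ε₀ > 0 such that for all ε, ε′ ∈ (0, ε₀) and all a, b ∈ {1, …, m}, the orientation sign of the triple (x(ε), x_a, x_b) equals the orientation sign of the triple (x(ε′), x_a, x_b); i.e., the order type of the extended point sequence is the same for all sufficiently small ε > 0. -/
/-!
For fixed `a, b` the orientation determinant of `(x(ε), x a, x b)` is a polynomial of degree at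
most two in `ε`. Writing a nonzero real polynomial as `(X - c) ^ n * Q` with `Q c ≠ 0`, its sign
just to the right of `c` is the sign of `Q c`. Intersecting the finitely many neighbourhoods
obtained for the pairs `(a, b)` gives `ε₀`.
-/

/-- The orientation sign of an ordered triple of points in the plane:
the sign of the determinant of the matrix with rows `q - p` and `r - p`. -/
noncomputable def oriSign (p q r : ℝ × ℝ) : SignType :=
  SignType.sign ((q.1 - p.1) * (r.2 - p.2) - (q.2 - p.2) * (r.1 - p.1))

open Polynomial Filter Topology

theorem Polynomial.exists_eventually_sign_eval_eq (P : ℝ[X]) (a : ℝ) :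
    ∃ s : SignType, ∀ᶠ ε in 𝓝[>] a, SignType.sign (P.eval ε) = s := by
  rcases eq_or_ne P 0 with rfl | hP
  · exact ⟨0, by simp⟩
  obtain ⟨Q, hPQ, hQ⟩ := P.exists_eq_pow_rootMultiplicity_mul_and_not_dvd hP a
  have hQa : Q.eval a ≠ 0 := by rwa [dvd_iff_isRoot] at hQ
  have hQ_sign : ∀ᶠ ε in 𝓝 a, SignType.sign (Q.eval ε) = SignType.sign (Q.eval a) := by
    have := (continuousAt_sign_of_ne_zero hQa).tendsto.comp (Q.continuous.tendsto a)
    rwa [nhds_discrete SignType, tendsto_pure] at this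
  refine ⟨SignType.sign (Q.eval a), ?_⟩
  filter_upwards [nhdsWithin_le_nhds hQ_sign, self_mem_nhdsWithin] with ε hε (hεa : a < ε)
  rw [hPQ, eval_mul, sign_mul, hε, eval_pow, eval_sub, eval_X, eval_C,
    sign_pow, sign_pos (sub_pos.mpr hεa), one_pow, one_mul]

theorem exists_polynomial_oriSign_eq_sign_eval (p v w q r : ℝ × ℝ) (ρ σ : ℝ) :
    ∃ P : ℝ[X], ∀ ε : ℝ,
      oriSign (p + (ρ * ε) • v + (σ * ε ^ 2) • w) q r = SignType.sign (P.eval ε) := by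
  refine ⟨C ((q.1 - p.1) * (r.2 - p.2) - (q.2 - p.2) * (r.1 - p.1))
    + C (ρ * (v.2 * (r.1 - q.1) - v.1 * (r.2 - q.2))) * X
    + C (σ * (w.2 * (r.1 - q.1) - w.1 * (r.2 - q.2))) * X ^ 2, fun ε => ?_⟩
  simp only [oriSign, eval_add, eval_mul, eval_C, eval_X, eval_pow, Prod.fst_add, Prod.snd_add,
    Prod.smul_fst, Prod.smul_snd, smul_eq_mul]
  congr 1
  ring

theorem stmt19_general (m : ℕ) (x : Fin m → ℝ × ℝ) (i j k : Fin m)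
    (ρ σ : ℝ) :
    ∃ ε₀ : ℝ, 0 < ε₀ ∧ ∀ ε ε' : ℝ, 0 < ε → ε < ε₀ → 0 < ε' → ε' < ε₀ →
      ∀ a b : Fin m,
        oriSign (x i + (ρ * ε) • (x j - x i) + (σ * ε ^ 2) • (x k - x i)) (x a) (x b) =
        oriSign (x i + (ρ * ε') • (x j - x i) + (σ * ε' ^ 2) • (x k - x i)) (x a) (x b) := by
  have h_eventually : ∀ a b : Fin m, ∃ s : SignType, ∀ᶠ ε in 𝓝[>] (0 : ℝ),
      oriSign (x i + (ρ * ε) • (x j - x i) + (σ * ε ^ 2) • (x k - x i)) (x a) (x b) = s := by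
    intro a b
    obtain ⟨P, hP⟩ :=
      exists_polynomial_oriSign_eq_sign_eval (x i) (x j - x i) (x k - x i) (x a) (x b) ρ σ
    simpa only [hP] using P.exists_eventually_sign_eval_eq 0
  choose s hs using h_eventually
  have h_all := eventually_all.mpr fun a => eventually_all.mpr (hs a)
  obtain ⟨ε₀, hε₀, hsub⟩ := mem_nhdsGT_iff_exists_Ioo_subset.mp h_all
  refine ⟨ε₀, hε₀, fun ε ε' hε hεε₀ hε' hε'ε₀ a b => ?_⟩
  rw [hsub ⟨hε, hεε₀⟩ a b, hsub ⟨hε', hε'ε₀⟩ a b]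

theorem stmt19 (m : ℕ) (x : Fin m → ℝ × ℝ) (i j k : Fin m)
    (hindep : AffineIndependent ℝ ![x i, x j, x k])
    (ρ σ : ℝ) (hρ : ρ = 1 ∨ ρ = -1) (hσ : σ = 1 ∨ σ = -1) :
    ∃ ε₀ : ℝ, 0 < ε₀ ∧ ∀ ε ε' : ℝ, 0 < ε → ε < ε₀ → 0 < ε' → ε' < ε₀ →
      ∀ a b : Fin m,
        oriSign (x i + (ρ * ε) • (x j - x i) + (σ * ε ^ 2) • (x k - x i)) (x a) (x b) =
        oriSign (x i + (ρ * ε') • (x j - x i) + (σ * ε' ^ 2) • (x k - x i)) (x a) (x b) :=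
  stmt19_general m x i j k ρ σ
end
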